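/- For the query language CRPQ[=], the 2GGD φ' = ((x)(y), ∅ ⇒ (x) → (y), ∅) — whose source is the disconnected CQ with two vertex variables and no edge variable and whose target requires an edge from x to y, so that φ' states that the graph is a clique — is not expressible by any finite set of PG-Keys: no finite set of PG-Keys can distinguish a large enough clique from the disjoint union of two copies of it. -/
import Mathlib


namespace PGC

/-- Objects (vertex/edge identifiers). -/
abbrev Obj := ℕ
/-- Labels. -/
abbrev Lab := ℕ
/-- Property keys. -/
abbrev Key := ℕ
/-- Data values. -/
abbrev Val := ℕ
/-- Variables. -/
abbrev Var := ℕ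

/-- A property graph `G = (V, E, η, λ, π)`. -/
structure PGraph where
  V : Finset Obj
  E : Finset Obj
  disj : Disjoint V E
  src : Obj → Obj
  tgt : Obj → Obj
  lab : Obj → Finset Lab
  prop : Obj → Key → Option Val
  src_mem : ∀ e ∈ E, src e ∈ V
  tgt_mem : ∀ e ∈ E, tgt e ∈ V

/-- A walk (path), given by its start vertex and its list of edges. -/
structure Walk where
  start : Obj
  edges : List Obj
deriving DecidableEq

/-- The list of edges forms a walk in `G` starting at the given vertex. -/
def PGraph.walkFrom (G : PGraph) : Obj → List Obj → Prop
  | u, [] => u ∈ G.V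
  | u, e :: es => e ∈ G.E ∧ G.src e = u ∧ G.walkFrom (G.tgt e) es

/-- The final vertex of a walk. -/
def Walk.endpt (G : PGraph) (w : Walk) : Obj :=
  w.edges.foldl (fun _ e => G.tgt e) w.start

/-- What a variable can be bound to: an object (vertex or edge) or a walk. -/
inductive Target where
  | obj (o : Obj)
  | walk (w : Walk)
deriving DecidableEq

/-- Atoms of conjunctive (regular path) queries. -/
inductive Atom where
  | vertex (x : Var) (ls : List Lab)
  | edge (x e y : Var) (ls : List Lab)
  | path (x p y : Var) (r : RegularExpression Lab)

def Atom.vars : Atom → Finset Var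
  | .vertex x _ => {x}
  | .edge x e y _ => {x, e, y}
  | .path x p y _ => {x, p, y}

def Atom.isPath : Atom → Prop
  | .path _ _ _ _ => True
  | _ => False

/-- A query is a finite conjunction of atoms. -/
abbrev Query := List Atom

/-- Variables of a query. -/
def qvars (Q : Query) : Finset Var := Q.foldr (fun a s => a.vars ∪ s) ∅

/-- Satisfaction of an atom by an assignment `h` in a property graph. -/
def Atom.sat (G : PGraph) (h : Var → Target) : Atom → Prop
  | .vertex x ls => ∃ o, h x = .obj o ∧ o ∈ G.V ∧ ∀ l ∈ ls, l ∈ G.lab o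
  | .edge x e y ls => ∃ ox oe oy, h x = .obj ox ∧ h e = .obj oe ∧ h y = .obj oy ∧
      oe ∈ G.E ∧ G.src oe = ox ∧ G.tgt oe = oy ∧ ∀ l ∈ ls, l ∈ G.lab oe
  | .path x p y r => ∃ ox w oy, h x = .obj ox ∧ h p = .walk w ∧ h y = .obj oy ∧
      w.start = ox ∧ G.walkFrom ox w.edges ∧ Walk.endpt G w = oy ∧
      ∃ word : List Lab, word ∈ r.matches' ∧
        List.Forall₂ (fun e l => l ∈ G.lab e) w.edges word

/-- A match of a query `Q` over `G` (all-walk semantics). -/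
def Match (G : PGraph) (Q : Query) (h : Var → Target) : Prop :=
  ∀ a ∈ Q, a.sat G h

/-- The property value `h(x).a`, if defined. -/
def propOf (G : PGraph) (h : Var → Target) (x : Var) (a : Key) : Option Val :=
  match h x with
  | .obj o => G.prop o a
  | .walk _ => none

/-- Data predicates. -/
inductive Pred where
  | propEq (x : Var) (a : Key) (y : Var) (b : Key)   -- x.a = y.b
  | propEqC (x : Var) (a : Key) (c : Val)            -- x.a = c
  | ex (x : Var) (a : Key)                           -- ex(x.a)
  | idEq (x y : Var)                                 -- x = y
  | propNe (x : Var) (a : Key) (y : Var) (b : Key)   -- x.a ≠ y.b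
  | propNeC (x : Var) (a : Key) (c : Val)            -- x.a ≠ c
  | idNe (x y : Var)                                 -- x ≠ y

/-- Satisfaction of a data predicate. -/
def Pred.sat (G : PGraph) (h : Var → Target) : Pred → Prop
  | .propEq x a y b => ∃ v, propOf G h x a = some v ∧ propOf G h y b = some v
  | .propEqC x a c => propOf G h x a = some c
  | .ex x a => (propOf G h x a).isSome
  | .idEq x y => h x = h y
  | .propNe x a y b => ∃ v w, propOf G h x a = some v ∧ propOf G h y b = some w ∧ v ≠ w
  | .propNeC x a c => ∃ v, propOf G h x a = some v ∧ v ≠ c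
  | .idNe x y => h x ≠ h y

def Pred.vars : Pred → Finset Var
  | .propEq x _ y _ => {x, y}
  | .propEqC x _ _ => {x}
  | .ex x _ => {x}
  | .idEq x y => {x, y}
  | .propNe x _ y _ => {x, y}
  | .propNeC x _ _ => {x}
  | .idNe x y => {x, y}

/-- `h ⊨ C`: every predicate of `C` holds under `h`. -/
def satC (G : PGraph) (h : Var → Target) (C : List Pred) : Prop :=
  ∀ p ∈ C, p.sat G h

/-- A predicate uses only equality (no inequality). -/
def Pred.isEq : Pred → Prop
  | .propEq _ _ _ _ => True
  | .propEqC _ _ _ => True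
  | .ex _ _ => True
  | .idEq _ _ => True
  | _ => False

/-- A predicate is an equality with a constant. -/
def Pred.isEqC : Pred → Prop
  | .propEqC _ _ _ => True
  | _ => False

/-- A query language: whether path atoms are allowed, and which data predicates are allowed. -/
structure QLang where
  allowPaths : Bool
  allowPred : Pred → Prop

/-- CQ[=] -/
def CQeq : QLang := ⟨false, Pred.isEq⟩
/-- CQ[=,≠] -/
def CQeqNe : QLang := ⟨false, fun _ => True⟩
/-- CRPQ[=] -/
def CRPQeq : QLang := ⟨true, Pred.isEq⟩
/-- CRPQ[=,≠] -/
def CRPQeqNe : QLang := ⟨true, fun _ => True⟩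
/-- CRPQ[=_c] -/
def CRPQeqC : QLang := ⟨true, Pred.isEqC⟩

/-- The query belongs to the query language. -/
def QueryIn (L : QLang) (Q : Query) : Prop :=
  ∀ a ∈ Q, a.isPath → L.allowPaths = true

/-- All predicates belong to the query language. -/
def PredsIn (L : QLang) (C : List Pred) : Prop :=
  ∀ p ∈ C, L.allowPred p

/-- Graph functional dependency `(Q(x̄,ȳ), C_s(x̄,ȳ) ⇒ C_t(x̄))`. -/
structure GFD where
  shared : List Var
  Q : Query
  Cs : List Pred
  Ct : List Pred

def GFD.wf (L : QLang) (φ : GFD) : Prop :=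
  QueryIn L φ.Q ∧ PredsIn L φ.Cs ∧ PredsIn L φ.Ct ∧
  φ.shared.toFinset ⊆ qvars φ.Q ∧
  (∀ p ∈ φ.Ct, p.vars ⊆ φ.shared.toFinset) ∧
  (∀ p ∈ φ.Cs, p.vars ⊆ qvars φ.Q)

def GFD.sat (φ : GFD) (G : PGraph) : Prop :=
  ∀ h, Match G φ.Q h → satC G h φ.Cs → satC G h φ.Ct

def GFD.allVars (φ : GFD) : Finset Var :=
  qvars φ.Q ∪ φ.shared.toFinset ∪ (φ.Cs ++ φ.Ct).foldr (fun p s => p.vars ∪ s) ∅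

/-- Graph generating dependency `(Q_s(x̄,ȳ), C_s(x̄,ȳ) ⇒ Q_t(x̄,z̄), C_t(x̄,z̄))`. -/
structure GGD where
  shared : List Var
  Qs : Query
  Cs : List Pred
  Qt : Query
  Ct : List Pred

def GGD.wf (L : QLang) (φ : GGD) : Prop :=
  QueryIn L φ.Qs ∧ QueryIn L φ.Qt ∧ PredsIn L φ.Cs ∧ PredsIn L φ.Ct ∧
  φ.shared.toFinset ⊆ qvars φ.Qs ∧
  qvars φ.Qs ∩ qvars φ.Qt ⊆ φ.shared.toFinset ∧
  (∀ p ∈ φ.Cs, p.vars ⊆ qvars φ.Qs) ∧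
  (∀ p ∈ φ.Ct, p.vars ⊆ qvars φ.Qt ∪ φ.shared.toFinset)

def GGD.sat (φ : GGD) (G : PGraph) : Prop :=
  ∀ hs, Match G φ.Qs hs → satC G hs φ.Cs →
    ∃ ht, Match G φ.Qt ht ∧ (∀ v ∈ φ.shared, ht v = hs v) ∧ satC G ht φ.Ct

/-- Assertion keywords of PG-Keys. -/
inductive KW where
  | mandatory
  | exclusive
  | singleton
deriving DecidableEq

/-- Entries of a key expression: a variable or a property reference `v.a`. -/
inductive KeyExpr where
  | var (v : Var)
  | ref (v : Var) (a : Key)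

def KeyExpr.vars : KeyExpr → Finset Var
  | .var v => {v}
  | .ref v _ => {v}

/-- Value of a key-expression entry under a match, if defined. -/
def KeyExpr.eval (G : PGraph) (h : Var → Target) : KeyExpr → Option (Target ⊕ Val)
  | .var v => some (Sum.inl (h v))
  | .ref v a => (propOf G h v a).map Sum.inr

def keysDefined (G : PGraph) (h : Var → Target) (ks : List KeyExpr) : Prop :=
  ∀ k ∈ ks, (KeyExpr.eval G h k).isSome

def keysEq (G : PGraph) (h h' : Var → Target) (ks : List KeyExpr) : Prop :=
  ∀ k ∈ ks, KeyExpr.eval G h k = KeyExpr.eval G h' k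

/-- A PG-Key `(Q_s(x,ȳ), C_s ⇒ α(ν̄), Q_t(x,z̄), C_t)`. -/
structure PGKey where
  x : Var
  Qs : Query
  Cs : List Pred
  kw : KW
  keys : List KeyExpr
  Qt : Query
  Ct : List Pred

def PGKey.wf (L : QLang) (ψ : PGKey) : Prop :=
  QueryIn L ψ.Qs ∧ QueryIn L ψ.Qt ∧ PredsIn L ψ.Cs ∧ PredsIn L ψ.Ct ∧
  ψ.x ∈ qvars ψ.Qs ∧ ψ.x ∈ qvars ψ.Qt ∧
  qvars ψ.Qs ∩ qvars ψ.Qt = {ψ.x} ∧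
  (∀ p ∈ ψ.Cs, p.vars ⊆ qvars ψ.Qs) ∧
  (∀ p ∈ ψ.Ct, p.vars ⊆ qvars ψ.Qt) ∧
  (∀ k ∈ ψ.keys, k.vars ⊆ qvars ψ.Qt)

def PGKey.sat (ψ : PGKey) (G : PGraph) : Prop :=
  match ψ.kw with
  | .mandatory =>
      ∀ hs, Match G ψ.Qs hs → satC G hs ψ.Cs →
        ∃ ht, Match G ψ.Qt ht ∧ ht ψ.x = hs ψ.x ∧ satC G ht ψ.Ct ∧
          keysDefined G ht ψ.keys
  | .singleton =>
      ∀ hs, Match G ψ.Qs hs → satC G hs ψ.Cs →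
        ∀ ht ht', Match G ψ.Qt ht → satC G ht ψ.Ct → ht ψ.x = hs ψ.x →
          Match G ψ.Qt ht' → satC G ht' ψ.Ct → ht' ψ.x = hs ψ.x →
          keysDefined G ht ψ.keys → keysDefined G ht' ψ.keys →
          keysEq G ht ht' ψ.keys
  | .exclusive =>
      ∀ hs hs', Match G ψ.Qs hs → satC G hs ψ.Cs →
        Match G ψ.Qs hs' → satC G hs' ψ.Cs →
        ∀ ht ht', Match G ψ.Qt ht → satC G ht ψ.Ct → ht ψ.x = hs ψ.x →
          Match G ψ.Qt ht' → satC G ht' ψ.Ct → ht' ψ.x = hs' ψ.x →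
          keysDefined G ht ψ.keys → keysDefined G ht' ψ.keys →
          keysEq G ht ht' ψ.keys →
          hs ψ.x = hs' ψ.x

def PGKey.allVars (ψ : PGKey) : Finset Var :=
  qvars ψ.Qs ∪ qvars ψ.Qt ∪
  (ψ.Cs ++ ψ.Ct).foldr (fun p s => p.vars ∪ s) ∅ ∪
  ψ.keys.foldr (fun k s => k.vars ∪ s) ∅ ∪ {ψ.x}

/-- Variable renaming on atoms, queries, predicates and key expressions. -/
def Atom.rename (σ : Var → Var) : Atom → Atom
  | .vertex x ls => .vertex (σ x) ls
  | .edge x e y ls => .edge (σ x) (σ e) (σ y) ls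
  | .path x p y r => .path (σ x) (σ p) (σ y) r

def Query.rename (σ : Var → Var) (Q : Query) : Query := Q.map (Atom.rename σ)

def Pred.rename (σ : Var → Var) : Pred → Pred
  | .propEq x a y b => .propEq (σ x) a (σ y) b
  | .propEqC x a c => .propEqC (σ x) a c
  | .ex x a => .ex (σ x) a
  | .idEq x y => .idEq (σ x) (σ y)
  | .propNe x a y b => .propNe (σ x) a (σ y) b
  | .propNeC x a c => .propNeC (σ x) a c
  | .idNe x y => .idNe (σ x) (σ y)

def KeyExpr.rename (σ : Var → Var) : KeyExpr → KeyExpr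
  | .var v => .var (σ v)
  | .ref v a => .ref (σ v) a

/-- The existence predicates `ex(ν̄)` associated with a key expression. -/
def exPreds (ks : List KeyExpr) : List Pred :=
  ks.filterMap fun k =>
    match k with
    | .var _ => none
    | .ref v a => some (.ex v a)

/-- The predicate expressing equality of a key-expression entry with its `σ`-copy. -/
def keyEqPred (σ : Var → Var) : KeyExpr → Pred
  | .var v => .idEq v (σ v)
  | .ref v a => .propEq v a (σ v) a

/-- The renaming that fixes `x` and otherwise applies `σ`. -/
def fixAt (x : Var) (σ : Var → Var) : Var → Var :=
  fun v => if v = x then x else σ v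

/-- `G'` is an induced subgraph of `G`. -/
def InducedSubgraph (G' G : PGraph) : Prop :=
  G'.V ⊆ G.V ∧
  G'.E = G.E.filter (fun e => G.src e ∈ G'.V ∧ G.tgt e ∈ G'.V) ∧
  ∀ o ∈ G'.V ∪ G'.E, G'.src o = G.src o ∧ G'.tgt o = G.tgt o ∧
    G'.lab o = G.lab o ∧ ∀ k, G'.prop o k = G.prop o k

/-- A constraint (given by its satisfaction relation) is expressible by a
finite set of constraints of the class `C`. -/
def Expressible (s : PGraph → Prop) (C : Set (PGraph → Prop)) : Prop :=
  ∃ Ψ : List (PGraph → Prop), (∀ ψ ∈ Ψ, ψ ∈ C) ∧ ∀ G, s G ↔ ∀ ψ ∈ Ψ, ψ G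

/-- Expressiveness inclusion of constraint classes. -/
def ClassLE (C₁ C₂ : Set (PGraph → Prop)) : Prop :=
  ∀ s ∈ C₁, Expressible s C₂

/-- Equal expressive power. -/
def ClassEquiv (C₁ C₂ : Set (PGraph → Prop)) : Prop :=
  ClassLE C₁ C₂ ∧ ClassLE C₂ C₁

/-- Strict expressiveness inclusion. -/
def ClassLT (C₁ C₂ : Set (PGraph → Prop)) : Prop :=
  ClassLE C₁ C₂ ∧ ∃ s ∈ C₂, ¬ Expressible s C₁

/-- The class GFD over the query language `L`. -/
def GFDc (L : QLang) : Set (PGraph → Prop) :=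
  {s | ∃ φ : GFD, φ.wf L ∧ s = φ.sat}

/-- The class nGFD over `L`. -/
def nGFDc (n : ℕ) (L : QLang) : Set (PGraph → Prop) :=
  {s | ∃ φ : GFD, φ.wf L ∧ φ.shared.length ≤ n ∧ s = φ.sat}

/-- The class GGD over `L`. -/
def GGDc (L : QLang) : Set (PGraph → Prop) :=
  {s | ∃ φ : GGD, φ.wf L ∧ s = φ.sat}

/-- The class nGGD over `L`. -/
def nGGDc (n : ℕ) (L : QLang) : Set (PGraph → Prop) :=
  {s | ∃ φ : GGD, φ.wf L ∧ φ.shared.length ≤ n ∧ s = φ.sat}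

/-- The class PG-Keys over `L`. -/
def PGKc (L : QLang) : Set (PGraph → Prop) :=
  {s | ∃ ψ : PGKey, ψ.wf L ∧ s = ψ.sat}

/-- The class mPG-Keys over `L`. -/
def mPGKc (L : QLang) : Set (PGraph → Prop) :=
  {s | ∃ ψ : PGKey, ψ.wf L ∧ ψ.kw = KW.mandatory ∧ s = ψ.sat}


/-- The 2GGD `φ' = ((x)(y), ∅ ⇒ (x) → (y), ∅)` stating that the graph is a clique,
with `x = 0`, `y = 1` and target edge variable `2`. -/
def cliqueGGD : GGD :=
  ⟨[0, 1], [Atom.vertex 0 [], Atom.vertex 1 []], [], [Atom.edge 0 2 1 []], []⟩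

/-! ### Auxiliary development for Statement 18 -/

/-- Map a target along an object renaming. -/
def mapT (f : Obj → Obj) : Target → Target
  | .obj o => .obj (f o)
  | .walk w => .walk ⟨f w.start, w.edges.map f⟩

lemma mapT_id (t : Target) : mapT id t = t := by
  cases t with
  | obj o => rfl
  | walk w => simp [mapT]

/-- A homomorphism condition between property graphs. -/
structure HomOn (f : Obj → Obj) (G G' : PGraph) : Prop where
  hV : ∀ o ∈ G.V, f o ∈ G'.V
  hE : ∀ e ∈ G.E, f e ∈ G'.E
  hsrc : ∀ e ∈ G.E, G'.src (f e) = f (G.src e)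
  htgt : ∀ e ∈ G.E, G'.tgt (f e) = f (G.tgt e)
  hlab : ∀ o l, l ∈ G.lab o → l ∈ G'.lab (f o)

lemma walkFrom_map {f : Obj → Obj} {G G' : PGraph} (hf : HomOn f G G') :
    ∀ (es : List Obj) (u : Obj), G.walkFrom u es → G'.walkFrom (f u) (es.map f)
  | [], u, h => hf.hV u h
  | e :: es, u, h => by
    obtain ⟨he, hs, hw⟩ := h
    exact ⟨hf.hE e he, by rw [hf.hsrc e he, hs], by
      rw [hf.htgt e he]; exact walkFrom_map hf es _ hw⟩

lemma endpt_cons {G : PGraph} {u e : Obj} {es : List Obj} :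
    Walk.endpt G ⟨u, e :: es⟩ = Walk.endpt G ⟨G.tgt e, es⟩ := rfl

lemma endpt_map {f : Obj → Obj} {G G' : PGraph} (hf : HomOn f G G') :
    ∀ (es : List Obj) (u : Obj), G.walkFrom u es →
      Walk.endpt G' ⟨f u, es.map f⟩ = f (Walk.endpt G ⟨u, es⟩)
  | [], u, _ => rfl
  | e :: es, u, h => by
    obtain ⟨he, _, hw⟩ := h
    show Walk.endpt G' ⟨G'.tgt (f e), es.map f⟩ = f (Walk.endpt G ⟨G.tgt e, es⟩)
    rw [hf.htgt e he]
    exact endpt_map hf es _ hw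

lemma endpt_mem {G : PGraph} :
    ∀ (es : List Obj) (u : Obj), G.walkFrom u es → Walk.endpt G ⟨u, es⟩ ∈ G.V
  | [], u, h => h
  | e :: es, u, h => by
    obtain ⟨_, _, hw⟩ := h
    exact endpt_mem es _ hw

lemma atom_sat_map {f : Obj → Obj} {G G' : PGraph} (hf : HomOn f G G')
    {h : Var → Target} {a : Atom} (ha : a.sat G h) :
    a.sat G' (fun v => mapT f (h v)) := by
  cases a with
  | vertex x ls =>
    obtain ⟨o, hx, hV, hl⟩ := ha
    exact ⟨f o, by simp [hx, mapT], hf.hV o hV, fun l hl' => hf.hlab o l (hl l hl')⟩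
  | edge x e y ls =>
    obtain ⟨ox, oe, oy, hx, he, hy, hE, hs, ht, hl⟩ := ha
    exact ⟨f ox, f oe, f oy, by simp [hx, mapT], by simp [he, mapT], by simp [hy, mapT],
      hf.hE oe hE, by rw [hf.hsrc oe hE, hs], by rw [hf.htgt oe hE, ht],
      fun l hl' => hf.hlab oe l (hl l hl')⟩
  | path x p y r =>
    obtain ⟨ox, w, oy, hx, hp, hy, hst, hwf, hend, word, hword, hall⟩ := ha
    refine ⟨f ox, ⟨f w.start, w.edges.map f⟩, f oy, by simp [hx, mapT],
      by simp [hp, mapT], by simp [hy, mapT], by rw [hst],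
      walkFrom_map hf w.edges ox hwf, ?_, word, hword, ?_⟩
    · have hwf' : G.walkFrom w.start w.edges := by rw [hst]; exact hwf
      have hE := endpt_map hf w.edges w.start hwf'
      show Walk.endpt G' ⟨f w.start, w.edges.map f⟩ = f oy
      rw [hE, show (⟨w.start, w.edges⟩ : Walk) = w from rfl, hend]
    · rw [List.forall₂_map_left_iff]
      exact hall.imp fun {e l} hl => hf.hlab e l hl

lemma match_map {f : Obj → Obj} {G G' : PGraph} (hf : HomOn f G G')
    {Q : Query} {h : Var → Target} (hm : Match G Q h) :
    Match G' Q (fun v => mapT f (h v)) :=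
  fun a ha => atom_sat_map hf (hm a ha)

/-- All our graphs have constant properties. -/
def PropsC (G : PGraph) : Prop := G.prop = fun _ _ => some 0

lemma propOf_map {G G' : PGraph} (hG : PropsC G) (hG' : PropsC G')
    (f : Obj → Obj) (h : Var → Target) (x : Var) (a : Key) :
    propOf G' (fun v => mapT f (h v)) x a = propOf G h x a := by
  unfold PropsC at hG hG'
  cases hx : h x <;> simp [propOf, hx, mapT, hG, hG']

lemma propOf_congr {G G' : PGraph} (hG : PropsC G) (hG' : PropsC G')
    (h : Var → Target) (x : Var) (a : Key) :
    propOf G' h x a = propOf G h x a := by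
  unfold PropsC at hG hG'
  cases hx : h x <;> simp [propOf, hx, hG, hG']

lemma predsat_map {G G' : PGraph} (hG : PropsC G) (hG' : PropsC G')
    (f : Obj → Obj) (h : Var → Target) (p : Pred) (hp : p.isEq)
    (hs : p.sat G h) : p.sat G' (fun v => mapT f (h v)) := by
  cases p with
  | propEq x a y b =>
    obtain ⟨v, h1, h2⟩ := hs
    exact ⟨v, by rw [propOf_map hG hG']; exact h1, by rw [propOf_map hG hG']; exact h2⟩
  | propEqC x a c =>
    rw [Pred.sat, propOf_map hG hG']; exact hs
  | ex x a =>
    rw [Pred.sat, propOf_map hG hG']; exact hs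
  | idEq x y =>
    show mapT f (h x) = mapT f (h y)
    rw [show h x = h y from hs]
  | propNe x a y b => exact absurd hp (by simp [Pred.isEq])
  | propNeC x a c => exact absurd hp (by simp [Pred.isEq])
  | idNe x y => exact absurd hp (by simp [Pred.isEq])

lemma predsat_congr {G G' : PGraph} (hG : PropsC G) (hG' : PropsC G')
    (h : Var → Target) (p : Pred) : p.sat G h ↔ p.sat G' h := by
  cases p <;> simp [Pred.sat, propOf_congr hG hG' h]

lemma satC_congr {G G' : PGraph} (hG : PropsC G) (hG' : PropsC G')
    (h : Var → Target) (C : List Pred) : satC G h C ↔ satC G' h C := by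
  unfold satC
  exact forall₂_congr fun p _ => predsat_congr hG hG' h p

lemma eval_congr {G G' : PGraph} (hG : PropsC G) (hG' : PropsC G')
    (h : Var → Target) (k : KeyExpr) :
    KeyExpr.eval G h k = KeyExpr.eval G' h k := by
  cases k with
  | var v => rfl
  | ref v a => rw [KeyExpr.eval, KeyExpr.eval, propOf_congr hG hG' h]

lemma eval_map_isSome {G G' : PGraph} (hG : PropsC G) (hG' : PropsC G')
    (f : Obj → Obj) (h : Var → Target) (k : KeyExpr) :
    (KeyExpr.eval G' (fun v => mapT f (h v)) k).isSome = (KeyExpr.eval G h k).isSome := by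
  cases k with
  | var v => rfl
  | ref v a => rw [KeyExpr.eval, KeyExpr.eval, propOf_map hG hG']

lemma keysDefined_map {G G' : PGraph} (hG : PropsC G) (hG' : PropsC G')
    (f : Obj → Obj) (h : Var → Target) (ks : List KeyExpr)
    (hk : keysDefined G h ks) : keysDefined G' (fun v => mapT f (h v)) ks := by
  intro k hk'
  rw [eval_map_isSome hG hG']
  exact hk k hk'

/-! ### Concrete graphs -/

/-- One-vertex clique: vertex `0` with loop edge `1`. -/
def K1 : PGraph :=
  ⟨{0}, {1}, by decide, fun _ => 0, fun _ => 0, fun _ => ∅, fun _ _ => some 0,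
    by decide, by decide⟩

/-- Two disjoint one-vertex cliques: vertices `0, 1` with loops `2, 3`. -/
def H1 : PGraph :=
  ⟨{0, 1}, {2, 3}, by decide, (· - 2), (· - 2), fun _ => ∅, fun _ _ => some 0,
    by decide, by decide⟩

/-- Two-vertex clique: vertices `0, 1`; edges `2 : 0→0`, `3 : 1→1`, `4 : 0→1`, `5 : 1→0`. -/
def K2 : PGraph :=
  ⟨{0, 1}, {2, 3, 4, 5}, by decide,
    fun e => if e ≤ 3 then e - 2 else e - 4,
    fun e => if e ≤ 3 then e - 2 else 5 - e,
    fun _ => ∅, fun _ _ => some 0, by decide, by decide⟩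

lemma K1props : PropsC K1 := rfl
lemma H1props : PropsC H1 := rfl
lemma K2props : PropsC K2 := rfl

/-- Folding map `H1 → K1`. -/
def g0 : Obj → Obj := fun o => if o ≤ 1 then 0 else 1

/-- Inclusion `K1 → H1` into copy `c`. -/
def jf (c : Obj) : Obj → Obj := fun o => if o = 0 then c else c + 2

lemma hom_g0 : HomOn g0 H1 K1 := by
  refine ⟨?_, ?_, ?_, ?_, ?_⟩
  · intro o ho; fin_cases ho <;> decide
  · intro e he; fin_cases he <;> decide
  · intro e he; fin_cases he <;> decide
  · intro e he; fin_cases he <;> decide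
  · intro o l hl; simp [H1] at hl

lemma hom_jf {c : Obj} (hc : c < 2) : HomOn (jf c) K1 H1 := by
  interval_cases c
  · exact ⟨by decide, by decide, by decide, by decide, fun o l hl => by simp [K1] at hl⟩
  · exact ⟨by decide, by decide, by decide, by decide, fun o l hl => by simp [K1] at hl⟩

lemma hom_id_H1K2 : HomOn id H1 K2 := by
  refine ⟨?_, ?_, ?_, ?_, ?_⟩
  · intro o ho; fin_cases ho <;> decide
  · intro e he; fin_cases he <;> decide
  · intro e he; fin_cases he <;> decide
  · intro e he; fin_cases he <;> decide
  · intro o l hl; simp [H1] at hl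

lemma match_id_H1K2 {Q : Query} {h : Var → Target} (hm : Match H1 Q h) :
    Match K2 Q h := by
  have := match_map hom_id_H1K2 hm
  simpa [mapT_id] using this

/-! ### Validity of bound targets -/

def ValidT (G : PGraph) : Target → Prop
  | .obj o => o ∈ G.V ∪ G.E
  | .walk w => G.walkFrom w.start w.edges

lemma sat_valid {G : PGraph} {h : Var → Target} {a : Atom} {x : Var}
    (hx : x ∈ a.vars) (ha : a.sat G h) : ValidT G (h x) := by
  cases a with
  | vertex y ls =>
    obtain ⟨o, hy, hV, _⟩ := ha
    simp [Atom.vars] at hx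
    subst hx
    simp [ValidT, hy, Finset.mem_union, hV]
  | edge x0 e y0 ls =>
    obtain ⟨ox, oe, oy, hx0, he, hy0, hE, hs, ht, _⟩ := ha
    simp [Atom.vars] at hx
    rcases hx with rfl | rfl | rfl
    · simp [ValidT, hx0, Finset.mem_union]; exact Or.inl (hs ▸ G.src_mem oe hE)
    · simp [ValidT, he, Finset.mem_union, hE]
    · simp [ValidT, hy0, Finset.mem_union]; exact Or.inl (ht ▸ G.tgt_mem oe hE)
  | path x0 p y0 r =>
    obtain ⟨ox, w, oy, hx0, hp, hy0, hst, hwf, hend, _⟩ := ha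
    simp [Atom.vars] at hx
    rcases hx with rfl | rfl | rfl
    · have : ox ∈ G.V := by
        cases hes : w.edges with
        | nil => rw [hes] at hwf; exact hwf
        | cons e es => rw [hes] at hwf; exact hwf.2.1 ▸ G.src_mem e hwf.1
      simp [ValidT, hx0, Finset.mem_union, this]
    · rw [← hst] at hwf
      simp [ValidT, hp, hwf]
    · have : oy ∈ G.V := by
        rw [← hend]
        have : w = ⟨w.start, w.edges⟩ := rfl
        rw [this]
        exact endpt_mem w.edges w.start (hst ▸ hwf)
      simp [ValidT, hy0, Finset.mem_union, this]

lemma mem_qvars {Q : Query} {x : Var} : x ∈ qvars Q ↔ ∃ a ∈ Q, x ∈ a.vars := by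
  induction Q with
  | nil => simp [qvars]
  | cons a Q ih =>
    show x ∈ a.vars ∪ qvars Q ↔ _
    rw [Finset.mem_union, ih]
    simp

lemma nat_h1 {e s : ℕ} (hE : e = 2 ∨ e = 3) (hs : e - 2 = s) : e = s + 2 := by omega

lemma nat_le1 {s : ℕ} (h : s ≤ 1) : s = 0 ∨ s = 1 := by omega

/-- Edges of an `H1`-walk from `s` are all equal to `s + 2`, and `s ≤ 1`. -/
lemma H1_walk_struct : ∀ (es : List Obj) (s : Obj), H1.walkFrom s es →
    s ≤ 1 ∧ ∀ e ∈ es, e = s + 2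
  | [], s, h => by
    refine ⟨?_, by simp⟩
    have : s ∈ H1.V := h
    fin_cases this <;> simp
  | e :: es, s, h => by
    obtain ⟨he, hs, hw⟩ := h
    have he2 : e ∈ H1.E := he
    have hE : e = 2 ∨ e = 3 := by fin_cases he2 <;> simp
    have hsrc : H1.src e = e - 2 := rfl
    have htgt : H1.tgt e = e - 2 := rfl
    rw [hsrc] at hs
    have hes : e = s + 2 := nat_h1 hE hs
    have htail := H1_walk_struct es (H1.tgt e) hw
    rw [htgt] at htail
    rw [hs] at htail
    refine ⟨htail.1, ?_⟩
    intro e' he'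
    rcases List.mem_cons.mp he' with rfl | h' 
    · exact hes
    · exact htail.2 e' h'

lemma map_self {f : Obj → Obj} : ∀ (es : List Obj), (∀ e ∈ es, f e = e) → es.map f = es
  | [], _ => rfl
  | e :: es, h => by
    simp only [List.map_cons]
    rw [h e (by simp), map_self es fun e' he' => h e' (by simp [he'])]

/-- Every valid target of `H1` lies in some copy `c` and is recovered by `jf c ∘ g0`. -/
lemma H1_fix (t : Target) (ht : ValidT H1 t) :
    ∃ c, c < 2 ∧ mapT (jf c) (mapT g0 t) = t := by
  cases t with
  | obj o =>
    have hm : o ∈ H1.V ∪ H1.E := ht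
    fin_cases hm
    · exact ⟨0, by decide, by decide⟩
    · exact ⟨1, by decide, by decide⟩
    · exact ⟨0, by decide, by decide⟩
    · exact ⟨1, by decide, by decide⟩
  | walk w =>
    have hw : H1.walkFrom w.start w.edges := ht
    obtain ⟨hs, hes⟩ := H1_walk_struct w.edges w.start hw
    refine ⟨w.start, Nat.lt_succ_of_le hs, ?_⟩
    simp only [mapT]
    have h1 : jf w.start (g0 w.start) = w.start := by
      rcases nat_le1 hs with h' | h' <;> rw [h'] <;> decide
    have h2 : (w.edges.map g0).map (jf w.start) = w.edges := by
      rw [List.map_map]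
      apply map_self
      intro e he
      rw [hes e he]
      rcases nat_le1 hs with h' | h' <;> rw [h'] <;> decide
    rw [h1, h2]

/-! ### Clique facts for the concrete graphs -/

lemma cliqueGGD_sat_K1 : cliqueGGD.sat K1 := by
  intro hs hm _
  refine ⟨fun v => if v = 2 then .obj 1 else hs v, ?_, ?_, ?_⟩
  · intro a ha
    have h0 := hm (Atom.vertex 0 []) (by simp [cliqueGGD])
    have h1 := hm (Atom.vertex 1 []) (by simp [cliqueGGD])
    obtain ⟨o0, h0a, h0b, _⟩ := h0
    obtain ⟨o1, h1a, h1b, _⟩ := h1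
    have ho0 : o0 = 0 := by have := h0b; fin_cases this; rfl
    have ho1 : o1 = 0 := by have := h1b; fin_cases this; rfl
    simp only [cliqueGGD, List.mem_singleton] at ha
    subst ha
    exact ⟨0, 1, 0, by simp [h0a, ho0], by simp, by simp [h1a, ho1],
      by decide, rfl, rfl, by simp⟩
  · intro v hv
    simp [cliqueGGD] at hv
    rcases hv with rfl | rfl <;> simp
  · intro p hp; simp [cliqueGGD] at hp

lemma cliqueGGD_sat_K2 : cliqueGGD.sat K2 := by
  intro hs hm _
  have h0 := hm (Atom.vertex 0 []) (by simp [cliqueGGD])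
  have h1 := hm (Atom.vertex 1 []) (by simp [cliqueGGD])
  obtain ⟨a, h0a, h0b, _⟩ := h0
  obtain ⟨b, h1a, h1b, _⟩ := h1
  have ha : a ≤ 1 := by have := h0b; fin_cases this <;> simp
  have hb : b ≤ 1 := by have := h1b; fin_cases this <;> simp
  refine ⟨fun v => if v = 2 then .obj (if a = b then a + 2 else 4 + a) else hs v, ?_, ?_, ?_⟩
  · intro at' hat
    simp only [cliqueGGD, List.mem_singleton] at hat
    subst hat
    refine ⟨a, (if a = b then a + 2 else 4 + a), b, by simp [h0a], by simp, by simp [h1a],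
      ?_, ?_, ?_, by simp⟩
    · interval_cases a <;> interval_cases b <;> decide
    · interval_cases a <;> interval_cases b <;> decide
    · interval_cases a <;> interval_cases b <;> decide
  · intro v hv
    simp [cliqueGGD] at hv
    rcases hv with rfl | rfl <;> simp
  · intro p hp; simp [cliqueGGD] at hp

lemma cliqueGGD_not_sat_H1 : ¬ cliqueGGD.sat H1 := by
  intro h
  have hm : Match H1 cliqueGGD.Qs (fun v => .obj v) := by
    intro a ha
    simp [cliqueGGD] at ha
    rcases ha with rfl | rfl
    · exact ⟨0, rfl, by decide, by simp⟩
    · exact ⟨1, rfl, by decide, by simp⟩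
  obtain ⟨ht, hmt, hsh, _⟩ := h _ hm (by intro p hp; simp [cliqueGGD] at hp)
  have he := hmt (Atom.edge 0 2 1 []) (by simp [cliqueGGD])
  obtain ⟨ox, oe, oy, hx, he', hy, hE, hs, ht', _⟩ := he
  have h0 : ht 0 = .obj 0 := hsh 0 (by simp [cliqueGGD])
  have h1 : ht 1 = .obj 1 := hsh 1 (by simp [cliqueGGD])
  rw [h0] at hx
  rw [h1] at hy
  have hox : ox = 0 := by injection hx.symm
  have hoy : oy = 1 := by injection hy.symm
  have hE' : oe = 2 ∨ oe = 3 := by have := hE; fin_cases this <;> simp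
  have hsrc : H1.src oe = oe - 2 := rfl
  have htgt : H1.tgt oe = oe - 2 := rfl
  rw [hsrc, hox] at hs
  rw [htgt, hoy] at ht'
  rw [hs] at ht'
  exact absurd ht' (by decide)

/-- Main transfer: any well-formed PG-Key over CRPQ[=] holding on `K1` and `K2`
holds on `H1`. -/
lemma pgkey_transfer (ψ : PGKey) (hwf : ψ.wf CRPQeq) (h1 : ψ.sat K1) (h2 : ψ.sat K2) :
    ψ.sat H1 := by
  obtain ⟨_, _, hCs, hCt, hxQs, _, _, _, _, _⟩ := hwf
  cases hkw : ψ.kw with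
  | mandatory =>
    rw [PGKey.sat, hkw]
    rw [PGKey.sat, hkw] at h1
    intro hs hms hcs
    -- fold into K1
    have hmsK : Match K1 ψ.Qs (fun v => mapT g0 (hs v)) := match_map hom_g0 hms
    have hcsK : satC K1 (fun v => mapT g0 (hs v)) ψ.Cs := by
      intro p hp
      exact predsat_map H1props K1props g0 hs p (hCs p hp) (hcs p hp)
    obtain ⟨ht, hmt, htx, hct, hkd⟩ := h1 _ hmsK hcsK
    -- find the copy of hs x
    obtain ⟨a, haQ, hxa⟩ := mem_qvars.mp hxQs
    have hval : ValidT H1 (hs ψ.x) := sat_valid hxa (hms a haQ)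
    obtain ⟨c, hc, hfix⟩ := H1_fix _ hval
    refine ⟨fun v => mapT (jf c) (ht v), match_map (hom_jf hc) hmt, ?_, ?_, ?_⟩
    · show mapT (jf c) (ht ψ.x) = hs ψ.x
      rw [htx]
      exact hfix
    · intro p hp
      exact predsat_map K1props H1props (jf c) ht p (hCt p hp) (hct p hp)
    · exact keysDefined_map K1props H1props (jf c) ht ψ.keys hkd
  | singleton =>
    rw [PGKey.sat, hkw]
    rw [PGKey.sat, hkw] at h2
    intro hs hms hcs ht ht' hmt hct htx hmt' hct' htx' hkd hkd'
    have hkeq : keysEq K2 ht ht' ψ.keys :=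
      h2 hs (match_id_H1K2 hms) ((satC_congr H1props K2props hs _).mp hcs)
        ht ht' (match_id_H1K2 hmt) ((satC_congr H1props K2props ht _).mp hct) htx
        (match_id_H1K2 hmt') ((satC_congr H1props K2props ht' _).mp hct') htx'
        (fun k hk => by rw [← eval_congr H1props K2props]; exact hkd k hk)
        (fun k hk => by rw [← eval_congr H1props K2props]; exact hkd' k hk)
    intro k hk
    rw [eval_congr H1props K2props, eval_congr H1props K2props]
    exact hkeq k hk
  | exclusive =>
    rw [PGKey.sat, hkw]
    rw [PGKey.sat, hkw] at h2
    intro hs hs' hms hcs hms' hcs' ht ht' hmt hct htx hmt' hct' htx' hkd hkd' hkeq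
    exact h2 hs hs' (match_id_H1K2 hms) ((satC_congr H1props K2props hs _).mp hcs)
      (match_id_H1K2 hms') ((satC_congr H1props K2props hs' _).mp hcs')
      ht ht' (match_id_H1K2 hmt) ((satC_congr H1props K2props ht _).mp hct) htx
      (match_id_H1K2 hmt') ((satC_congr H1props K2props ht' _).mp hct') htx'
      (fun k hk => by rw [← eval_congr H1props K2props]; exact hkd k hk)
      (fun k hk => by rw [← eval_congr H1props K2props]; exact hkd' k hk)
      (fun k hk => by rw [← eval_congr H1props K2props, ← eval_congr H1props K2props]
                      exact hkeq k hk)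

/-- over CRPQ[=], the clique 2GGD is not expressible by any finite set
of PG-Keys. -/
theorem clique_ggd_not_in_pgkeys_crpq_eq :
    cliqueGGD.wf CRPQeq ∧ cliqueGGD.shared.length ≤ 2 ∧
    ¬ Expressible cliqueGGD.sat (PGKc CRPQeq) := by
  refine ⟨?_, by simp [cliqueGGD], ?_⟩
  · refine ⟨?_, ?_, ?_, ?_, ?_, ?_, ?_, ?_⟩
    · intro a ha hpa
      simp [cliqueGGD] at ha
      rcases ha with rfl | rfl <;> simp [Atom.isPath] at hpa
    · intro a ha hpa
      simp [cliqueGGD] at ha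
      subst ha; simp [Atom.isPath] at hpa
    · intro p hp; simp [cliqueGGD] at hp
    · intro p hp; simp [cliqueGGD] at hp
    · decide
    · decide
    · intro p hp; simp [cliqueGGD] at hp
    · intro p hp; simp [cliqueGGD] at hp
  · rintro ⟨Ψ, hΨ, hiff⟩
    have hK1 := (hiff K1).mp cliqueGGD_sat_K1
    have hK2 := (hiff K2).mp cliqueGGD_sat_K2
    apply cliqueGGD_not_sat_H1
    apply (hiff H1).mpr
    intro ψ hψ
    obtain ⟨φ, hwf, rfl⟩ := hΨ ψ hψ
    exact pgkey_transfer φ hwf (hK1 _ hψ) (hK2 _ hψ)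

end PGC
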